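/- Every first-order formula α(x_0) (over the frame language, with one free variable) obtained from atoms x_l ∈ E, with E quasi-safe, using only conjunction, disjunction and restricted universal quantification, is the local first-order correspondent of some generalized Sahlqvist formula: there is a generalized Sahlqvist formula φ such that for every Kripke frame F and point w, F, w ⊨ φ under every valuation iff F ⊨ α[w]. -/

import Mathlib

set_option autoImplicit true

universe u v w

/-- Modal formulas over modality indices `Λ` and propositional variables `V`. -/
inductive MF (Λ : Type u) (V : Type v) : Type (max u v)
  | var : V → MF Λ V
  | top : MF Λ V
  | bot : MF Λ V
  | and : MF Λ V → MF Λ V → MF Λ V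
  | or  : MF Λ V → MF Λ V → MF Λ V
  | neg : MF Λ V → MF Λ V
  | imp : MF Λ V → MF Λ V → MF Λ V
  | dia : Λ → MF Λ V → MF Λ V
  | box : Λ → MF Λ V → MF Λ V

namespace MF
variable {Λ : Type u} {V : Type v}

/-- The set of propositional variables occurring in a modal formula. -/
def vars : MF Λ V → Set V
  | var p => {p}
  | top => ∅
  | bot => ∅
  | and a b => vars a ∪ vars b
  | or a b => vars a ∪ vars b
  | neg a => vars a
  | imp a b => vars a ∪ vars b
  | dia _ a => vars a
  | box _ a => vars a

end MF

/-- Positive modal formulas: built without `¬` and `→`. -/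
inductive Positive {Λ : Type u} {V : Type v} : MF Λ V → Prop
  | var (p : V) : Positive (.var p)
  | top : Positive .top
  | bot : Positive .bot
  | and {a b} : Positive a → Positive b → Positive (.and a b)
  | or {a b} : Positive a → Positive b → Positive (.or a b)
  | dia (l) {a} : Positive a → Positive (.dia l a)
  | box (l) {a} : Positive a → Positive (.box l a)

/-- A Kripke frame with accessibility relations indexed by `Λ`. -/
structure Frame (Λ : Type u) where
  W : Type w
  R : Λ → W → W → Prop

/-- Kripke satisfaction `F, x, θ ⊨ φ`. -/
def sat {Λ : Type u} {V : Type v} (F : Frame Λ) (θ : V → Set F.W) : F.W → MF Λ V → Prop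
  | x, .var p => x ∈ θ p
  | _, .top => True
  | _, .bot => False
  | x, .and a b => sat F θ x a ∧ sat F θ x b
  | x, .or a b => sat F θ x a ∨ sat F θ x b
  | x, .neg a => ¬ sat F θ x a
  | x, .imp a b => sat F θ x a → sat F θ x b
  | x, .dia l a => ∃ y, F.R l x y ∧ sat F θ y a
  | x, .box l a => ∀ y, F.R l x y → sat F θ y a

/-- `BoxF φ p S`: `φ` is a box-formula with head `p`, in which the set of variables
occurring not as the head is `S`. -/
inductive BoxF {Λ : Type u} {V : Type v} : MF Λ V → V → Set V → Prop
  | var (p : V) : BoxF (.var p) p ∅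
  | imp {POS ψ p S} : Positive POS → BoxF ψ p S → BoxF (.imp POS ψ) p (MF.vars POS ∪ S)
  | box (l) {ψ p S} : BoxF ψ p S → BoxF (.box l ψ) p S

/-- `RegBF r φ p`: relative to the rank assignment `r`, `φ` is a regular box-formula
with head `p` (of rank `r p`): all variables of the positive antecedents have rank `< r p`. -/
inductive RegBF {Λ : Type u} {V : Type v} (r : V → ℕ) : MF Λ V → V → Prop
  | var (p : V) : RegBF r (.var p) p
  | imp {POS ψ p} : Positive POS → (∀ q ∈ MF.vars POS, r q < r p) →
      RegBF r ψ p → RegBF r (.imp POS ψ) p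
  | box (l) {ψ p} : RegBF r ψ p → RegBF r (.box l ψ) p

/-- The edge relation of the dependency graph of a set `A` of box-formulas:
`p → q` iff `p` occurs (not as the head) in some member of `A` with head `q`. -/
def depEdge {Λ : Type u} {V : Type v} (A : Set (MF Λ V)) (p q : V) : Prop :=
  ∃ φ ∈ A, ∃ S, BoxF φ q S ∧ p ∈ S

/-- A set of box-formulas is regular if its dependency graph has no oriented cycle. -/
def RegularSet {Λ : Type u} {V : Type v} (A : Set (MF Λ V)) : Prop :=
  ∀ p : V, ¬ Relation.TransGen (depEdge A) p p

/-- `R_λ^{-1}(A) = {u : ∃ v, u R_λ v ∧ v ∈ A}`. -/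
def Rinv {Λ : Type u} (F : Frame Λ) (l : Λ) (A : Set F.W) : Set F.W :=
  {u | ∃ v, F.R l u v ∧ v ∈ A}

/-- `R_λ^□(A) = {u : ∀ v, u R_λ v → v ∈ A}`. -/
def RboxOp {Λ : Type u} (F : Frame Λ) (l : Λ) (A : Set F.W) : Set F.W :=
  {u | ∀ v, F.R l u v → v ∈ A}

/-- `R_λ(A) = {u : ∃ v, v R_λ u ∧ v ∈ A}`. -/
def Rfwd {Λ : Type u} (F : Frame Λ) (l : Λ) (A : Set F.W) : Set F.W :=
  {u | ∃ v, F.R l v u ∧ v ∈ A}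

/-- The interpretation of the expression `KP^{POS}` in a frame `F`, the set variables
`P^l_i` being interpreted by `P`.  (Junk value `∅` on non-positive constructors.) -/
def KPsem {Λ : Type u} (F : Frame Λ) (P : ℕ × ℕ → Set F.W) : MF Λ (ℕ × ℕ) → Set F.W
  | .var q => P q
  | .top => Set.univ
  | .bot => ∅
  | .and a b => KPsem F P a ∩ KPsem F P b
  | .or a b => KPsem F P a ∪ KPsem F P b
  | .dia l a => Rinv F l (KPsem F P a)
  | .box l a => RboxOp F l (KPsem F P a)
  | .neg _ => ∅
  | .imp _ _ => ∅

/-- The interpretation of the expression `KV^φ` in a frame `F`: the set variables `P^l_i`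
are interpreted by `P` and the extra variable `#` by the second argument.
(Junk value `∅` on constructors that do not occur in regular box-formulas.) -/
def KVsem {Λ : Type u} (F : Frame Λ) (P : ℕ × ℕ → Set F.W) : MF Λ (ℕ × ℕ) → Set F.W → Set F.W
  | .var _, X => X
  | .imp POS ψ, X => KVsem F P ψ (X ∩ KPsem F P POS)
  | .box l ψ, X => KVsem F P ψ (Rfwd F l X)
  | _, _ => ∅

/-- The semantic minimal valuation: given points `g j` and sets `f j` of regular
box-formulas to be verified at `g j`, `thetaMinSem F g f k i` is the minimal value of the
variable `p^k_i`; it is defined by recursion on the rank `k` as the union, over all `j` and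
all `φ ∈ f j` with head `p^k_i`, of `KV^φ(g j)` computed with the minimal values of the
variables of lower rank. -/
noncomputable def thetaMinSem {Λ : Type u} (F : Frame Λ) {ι : Type w} (g : ι → F.W)
    (f : ι → Set (MF Λ (ℕ × ℕ))) : ℕ → ℕ → Set F.W :=
  fun k => Nat.strongRecOn (motive := fun _ => ℕ → Set F.W) k fun k ih i =>
    ⋃ (j : ι), ⋃ φ ∈ f j, ⋃ (_ : RegBF Prod.fst φ (k, i)),
      KVsem F (fun q => if h : q.1 < k then ih q.1 h q.2 else ∅) φ {g j}

/-- `L`-expressions: terms of the language `L` with individual variables `x_i` (`i : ℕ`),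
constants `⊤, ⊥`, unary `R_λ^{-1}`, `R_λ^□`, `R_λ` and binary `∩`, `∪`. -/
inductive LExp (Λ : Type u) : Type u
  | var : ℕ → LExp Λ
  | top : LExp Λ
  | bot : LExp Λ
  | inter : LExp Λ → LExp Λ → LExp Λ
  | union : LExp Λ → LExp Λ → LExp Λ
  | rinv : Λ → LExp Λ → LExp Λ
  | rbox : Λ → LExp Λ → LExp Λ
  | rfw : Λ → LExp Λ → LExp Λ

namespace LExp
variable {Λ : Type u}

/-- Denotation of an `L`-expression in a frame `F`, the variable `x_i` denoting the
singleton of the point `g i`. -/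
def den (F : Frame Λ) (g : ℕ → F.W) : LExp Λ → Set F.W
  | var i => {g i}
  | top => Set.univ
  | bot => ∅
  | inter a b => den F g a ∩ den F g b
  | union a b => den F g a ∪ den F g b
  | rinv l a => Rinv F l (den F g a)
  | rbox l a => RboxOp F l (den F g a)
  | rfw l a => Rfwd F l (den F g a)

/-- The set of (indices of) individual variables occurring in an `L`-expression. -/
def evars : LExp Λ → Set ℕ
  | var i => {i}
  | top => ∅
  | bot => ∅
  | inter a b => evars a ∪ evars b
  | union a b => evars a ∪ evars b
  | rinv _ a => evars a
  | rbox _ a => evars a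
  | rfw _ a => evars a

end LExp

/-- The subexpression relation on `L`-expressions. -/
inductive Subexp {Λ : Type u} : LExp Λ → LExp Λ → Prop
  | refl (e : LExp Λ) : Subexp e e
  | interL {e a b} : Subexp e a → Subexp e (.inter a b)
  | interR {e a b} : Subexp e b → Subexp e (.inter a b)
  | unionL {e a b} : Subexp e a → Subexp e (.union a b)
  | unionR {e a b} : Subexp e b → Subexp e (.union a b)
  | rinv (l) {e a} : Subexp e a → Subexp e (.rinv l a)
  | rbox (l) {e a} : Subexp e a → Subexp e (.rbox l a)
  | rfw (l) {e a} : Subexp e a → Subexp e (.rfw l a)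

/-- `SafeFor e`: `e` is "safe for" the ambient expression, i.e. `e` is a variable, or
`R_λ(e')` with `e'` safe for it, or an intersection one of whose components is safe for it. -/
inductive SafeFor {Λ : Type u} : LExp Λ → Prop
  | var (i : ℕ) : SafeFor (.var i)
  | rfw (l) {a} : SafeFor a → SafeFor (.rfw l a)
  | interL {a b} : SafeFor a → SafeFor (.inter a b)
  | interR {a b} : SafeFor b → SafeFor (.inter a b)

/-- An `L`-expression is safe if it is safe for itself and the argument of every
subexpression of the form `R_λ(ψ)` is safe for it. -/
def Safe {Λ : Type u} (e : LExp Λ) : Prop :=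
  SafeFor e ∧ ∀ l a, Subexp (.rfw l a) e → SafeFor a

mutual
  /-- The class `K`: the least class of `L`-expressions containing the variables and closed
  under `S ↦ R_λ(S)` and `S ↦ S ∩ E` for `E` a positive combination of members of `K`. -/
  inductive InK {Λ : Type u} : LExp Λ → Prop
    | var (i : ℕ) : InK (.var i)
    | rfw (l : Λ) {S : LExp Λ} : InK S → InK (.rfw l S)
    | inter {S E : LExp Λ} : InK S → PosOfK E → InK (.inter S E)
  /-- Positive combinations of members of `K`: built from members of `K` using only
  `∩`, `∪`, `R_λ^{-1}`, `R_λ^□`, `⊤`, `⊥`. -/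
  inductive PosOfK {Λ : Type u} : LExp Λ → Prop
    | ofK {e : LExp Λ} : InK e → PosOfK e
    | top : PosOfK .top
    | bot : PosOfK .bot
    | inter {a b} : PosOfK a → PosOfK b → PosOfK (.inter a b)
    | union {a b} : PosOfK a → PosOfK b → PosOfK (.union a b)
    | rinv (l) {a} : PosOfK a → PosOfK (.rinv l a)
    | rbox (l) {a} : PosOfK a → PosOfK (.rbox l a)
end

/-- Quasi-safe `L`-expressions: positive combinations of safe expressions, i.e. built from
safe expressions using only `∩`, `∪`, `R_λ^{-1}`, `R_λ^□`, `⊤`, `⊥`. -/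
inductive QuasiSafe {Λ : Type u} : LExp Λ → Prop
  | safe {e : LExp Λ} : Safe e → QuasiSafe e
  | top : QuasiSafe .top
  | bot : QuasiSafe .bot
  | inter {a b} : QuasiSafe a → QuasiSafe b → QuasiSafe (.inter a b)
  | union {a b} : QuasiSafe a → QuasiSafe b → QuasiSafe (.union a b)
  | rinv (l) {a} : QuasiSafe a → QuasiSafe (.rinv l a)
  | rbox (l) {a} : QuasiSafe a → QuasiSafe (.rbox l a)

/-- `ReplOne i ψ φ φ'`: `φ'` is the result of replacing one occurrence of the variable
`x_i` in `φ` by `ψ`. -/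
inductive ReplOne {Λ : Type u} (i : ℕ) (ψ : LExp Λ) : LExp Λ → LExp Λ → Prop
  | here : ReplOne i ψ (.var i) ψ
  | interL {a a' b} : ReplOne i ψ a a' → ReplOne i ψ (.inter a b) (.inter a' b)
  | interR {a b b'} : ReplOne i ψ b b' → ReplOne i ψ (.inter a b) (.inter a b')
  | unionL {a a' b} : ReplOne i ψ a a' → ReplOne i ψ (.union a b) (.union a' b)
  | unionR {a b b'} : ReplOne i ψ b b' → ReplOne i ψ (.union a b) (.union a b')
  | rinv (l) {a a'} : ReplOne i ψ a a' → ReplOne i ψ (.rinv l a) (.rinv l a')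
  | rbox (l) {a a'} : ReplOne i ψ a a' → ReplOne i ψ (.rbox l a) (.rbox l a')
  | rfw (l) {a a'} : ReplOne i ψ a a' → ReplOne i ψ (.rfw l a) (.rfw l a')

/-- A finite union of `L`-expressions (empty union is `⊥`). -/
def unionList {Λ : Type u} : List (LExp Λ) → LExp Λ
  | [] => .bot
  | e :: es => .union e (unionList es)

/-- `UnionOfSafe e`: `e` is a finite union of safe expressions. -/
inductive UnionOfSafe {Λ : Type u} : LExp Λ → Prop
  | bot : UnionOfSafe .bot
  | safe {e : LExp Λ} : Safe e → UnionOfSafe e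
  | union {a b} : UnionOfSafe a → UnionOfSafe b → UnionOfSafe (.union a b)

/-- Syntactic `KP^{POS}`: the `L`-expression obtained from the positive formula `POS` by
replacing each set variable `P^l_i` by the `L`-expression `KF (l, i)`.
(Junk value on non-positive constructors.) -/
def KPsub {Λ : Type u} (KF : ℕ × ℕ → LExp Λ) : MF Λ (ℕ × ℕ) → LExp Λ
  | .var q => KF q
  | .top => .top
  | .bot => .bot
  | .and a b => .inter (KPsub KF a) (KPsub KF b)
  | .or a b => .union (KPsub KF a) (KPsub KF b)
  | .dia l a => .rinv l (KPsub KF a)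
  | .box l a => .rbox l (KPsub KF a)
  | .neg _ => .bot
  | .imp _ _ => .bot

/-- Syntactic `KVF^φ(t)`: the `L`-expression obtained from `KV^φ` by substituting the
`L`-expression `t` for `#` and `KF (l, i)` for each set variable `P^l_i`.
(Junk value on constructors that do not occur in regular box-formulas.) -/
def KVFsyn {Λ : Type u} (KF : ℕ × ℕ → LExp Λ) : MF Λ (ℕ × ℕ) → LExp Λ → LExp Λ
  | .var _, t => t
  | .imp POS ψ, t => KVFsyn KF ψ (.inter t (KPsub KF POS))
  | .box l ψ, t => KVFsyn KF ψ (.rfw l t)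
  | _, _ => .bot

open scoped Classical in
/-- The syntactic minimal valuation `KF_f^{p^k_i}` for variables `x_0, …, x_{n-1}` and
`f` assigning to each variable a finite set of regular box-formulas: defined by recursion on
the rank `k` as the union, over all `j < n` and all `φ ∈ f j` with head `p^k_i`, of
`KVF_f^φ(x_j)`, which is `KV^φ` with `x_j` substituted for `#` and `KF_f^{p^l_m}`
substituted for each `P^l_m` with `l < k`. -/
noncomputable def KFsyn {Λ : Type u} (n : ℕ) (f : ℕ → Finset (MF Λ (ℕ × ℕ))) :
    ℕ → ℕ → LExp Λ :=
  fun k => Nat.strongRecOn (motive := fun _ => ℕ → LExp Λ) k fun k ih i =>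
    unionList (((List.range n).flatMap fun j =>
      ((f j).toList.filter fun φ => decide (RegBF Prod.fst φ (k, i))).map fun φ =>
        KVFsyn (fun q => if h : q.1 < k then ih q.1 h q.2 else LExp.bot) φ (LExp.var j)))

/-- The expressions substituted for the set variables `P^l_m`, `l < k`, in `KVF`:
the syntactic minimal valuations of the lower ranks. -/
noncomputable def lowKF {Λ : Type u} (n : ℕ) (f : ℕ → Finset (MF Λ (ℕ × ℕ))) (k : ℕ) :
    ℕ × ℕ → LExp Λ :=
  fun q => if q.1 < k then KFsyn n f q.1 q.2 else LExp.bot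

/-- `KVFat n f φ j k` is the `L`-expression `KVF_f^φ(x_j)` for `φ` a regular box-formula
of rank `k`. -/
noncomputable def KVFat {Λ : Type u} (n : ℕ) (f : ℕ → Finset (MF Λ (ℕ × ℕ)))
    (φ : MF Λ (ℕ × ℕ)) (j k : ℕ) : LExp Λ :=
  KVFsyn (lowKF n f k) φ (.var j)

/-- A labelled tree-like structure: a set of vertices with relations indexed by `Λ`,
a root, and a label function assigning to every vertex a set of labels from `α`. -/
structure LabTree (Λ : Type u) (α : Type v) where
  V : Type
  R : Λ → V → V → Prop
  root : V
  label : V → Set α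

/-- Derivation trees witnessing that a formula is built from base formulas using only
`∧` and `◇_λ`. -/
inductive BuiltT (Λ : Type u) (V : Type v) : Type (max u v)
  | base : MF Λ V → BuiltT Λ V
  | and : BuiltT Λ V → BuiltT Λ V → BuiltT Λ V
  | dia : Λ → BuiltT Λ V → BuiltT Λ V

/-- The modal formula described by a derivation tree. -/
def BuiltT.formula {Λ : Type u} {V : Type v} : BuiltT Λ V → MF Λ V
  | base φ => φ
  | and a b => .and a.formula b.formula
  | dia l a => .dia l a.formula

/-- The derivation tree uses only base formulas from `A`. -/
def BuiltT.Ok {Λ : Type u} {V : Type v} (A : Set (MF Λ V)) : BuiltT Λ V → Prop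
  | base φ => φ ∈ A
  | and a b => a.Ok A ∧ b.Ok A
  | dia _ a => a.Ok A

/-- Helper for gluing two labelled trees at their roots: the relation on the disjoint sum,
with the edges out of the second root re-attached to the first root. -/
def glueR {Λ : Type u} {W₁ W₂ : Type} (R₁ : Λ → W₁ → W₁ → Prop) (R₂ : Λ → W₂ → W₂ → Prop)
    (r₁ : W₁) (r₂ : W₂) (l : Λ) : W₁ ⊕ W₂ → W₁ ⊕ W₂ → Prop
  | Sum.inl a, Sum.inl b => R₁ l a b
  | Sum.inr a, Sum.inr b => R₂ l a b
  | Sum.inl a, Sum.inr b => a = r₁ ∧ R₂ l r₂ b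
  | Sum.inr _, Sum.inl _ => False

open Classical in
/-- Helper for gluing two labelled trees at their roots: the label function, the glued root
receiving the union of the two root labels. -/
noncomputable def glueLab {α : Type w} {W₁ W₂ : Type} (L₁ : W₁ → Set α) (L₂ : W₂ → Set α)
    (r₁ : W₁) (r₂ : W₂) : W₁ ⊕ W₂ → Set α
  | Sum.inl a => if a = r₁ then L₁ r₁ ∪ L₂ r₂ else L₁ a
  | Sum.inr b => L₂ b

/-- Helper for prefixing a labelled tree with a new root: the relation on `Option W`,
with an `R_{l₀}`-edge from the new root `none` to the old root `r`. -/
def prefR {Λ : Type u} {W : Type} (R : Λ → W → W → Prop) (l₀ : Λ) (r : W) (l : Λ) :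
    Option W → Option W → Prop
  | none, some w => l = l₀ ∧ w = r
  | some a, some b => R l a b
  | _, _ => False

/-- Helper for prefixing a labelled tree with a new root: the label function, the new root
getting the empty label. -/
def prefLab {α : Type w} {W : Type} (L : W → Set α) : Option W → Set α
  | none => ∅
  | some a => L a

/-- The reduced syntactical tree of a formula built from base formulas using `∧` and `◇_λ`:
a single root labelled `{a}` for a base formula `a`; for a conjunction, the two trees
with their roots identified (labels united); for `◇_λ ψ`, a new root with empty label and an
`R_λ`-edge to the root of the tree of `ψ`. -/
noncomputable def TreeOf {Λ : Type u} {V : Type v} : BuiltT Λ V → LabTree Λ (MF Λ V)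
  | .base φ =>
      { V := Unit, R := fun _ _ _ => False, root := (), label := fun _ => {φ} }
  | .and b₁ b₂ =>
      let T₁ := TreeOf b₁
      let T₂ := TreeOf b₂
      { V := {v : T₁.V ⊕ T₂.V // v ≠ Sum.inr T₂.root},
        R := fun l u v => glueR T₁.R T₂.R T₁.root T₂.root l u.1 v.1,
        root := ⟨Sum.inl T₁.root, by exact Sum.inl_ne_inr⟩,
        label := fun v => glueLab T₁.label T₂.label T₁.root T₂.root v.1 }
  | .dia l b =>
      let T := TreeOf b
      { V := Option T.V,
        R := fun l' u v => prefR T.R l T.root l' u v,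
        root := none,
        label := fun v => prefLab T.label v }

/-- Restrictedly positive first-order formulas over the frame language: built from atoms
`y ∈ E` (`E` an `L`-expression) using `∧`, `∨` and the restricted quantifiers
`(∀ y ◁_λ x)` and `(∃ y ◁_λ x)`. -/
inductive KrF (Λ : Type u) : Type u
  | atom : ℕ → LExp Λ → KrF Λ
  | and : KrF Λ → KrF Λ → KrF Λ
  | or : KrF Λ → KrF Λ → KrF Λ
  | all : ℕ → Λ → ℕ → KrF Λ → KrF Λ
  | ex : ℕ → Λ → ℕ → KrF Λ → KrF Λ

namespace KrF
variable {Λ : Type u}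

/-- Truth of a restrictedly positive formula in a frame under an assignment `g` of points to
individual variables; the atom `y ∈ E` is read via the `#`-translation, i.e. as membership
of `g y` in the denotation of `E`. -/
def holds (F : Frame Λ) : (ℕ → F.W) → KrF Λ → Prop
  | g, atom y E => g y ∈ E.den F g
  | g, and a b => holds F g a ∧ holds F g b
  | g, or a b => holds F g a ∨ holds F g b
  | g, all y l x β => ∀ w, F.R l (g x) w → holds F (Function.update g y w) β
  | g, ex y l x β => ∃ w, F.R l (g x) w ∧ holds F (Function.update g y w) β

/-- Free variables. -/
def fv : KrF Λ → Set ℕ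
  | atom y E => insert y E.evars
  | and a b => fv a ∪ fv b
  | or a b => fv a ∪ fv b
  | all y _ x β => insert x (fv β \ {y})
  | ex y _ x β => insert x (fv β \ {y})

/-- Bound variables. -/
def bv : KrF Λ → Set ℕ
  | atom _ _ => ∅
  | and a b => bv a ∪ bv b
  | or a b => bv a ∪ bv b
  | all y _ _ β => insert y (bv β)
  | ex y _ _ β => insert y (bv β)

/-- No two distinct quantifier occurrences bind the same variable. -/
def CleanBound : KrF Λ → Prop
  | atom _ _ => True
  | and a b => CleanBound a ∧ CleanBound b ∧ bv a ∩ bv b = ∅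
  | or a b => CleanBound a ∧ CleanBound b ∧ bv a ∩ bv b = ∅
  | all y _ _ β => CleanBound β ∧ y ∉ bv β
  | ex y _ _ β => CleanBound β ∧ y ∉ bv β

/-- Clean formulas: no variable occurs both free and bound, and no two distinct quantifier
occurrences bind the same variable. -/
def Clean (φ : KrF Λ) : Prop := fv φ ∩ bv φ = ∅ ∧ CleanBound φ

/-- All the `L`-expressions occurring in atoms of the formula satisfy `P`. -/
def AtomsAll (P : LExp Λ → Prop) : KrF Λ → Prop
  | atom _ E => P E
  | and a b => AtomsAll P a ∧ AtomsAll P b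
  | or a b => AtomsAll P a ∧ AtomsAll P b
  | all _ _ _ β => AtomsAll P β
  | ex _ _ _ β => AtomsAll P β

/-- Quantifier-free formulas (built from atoms using only `∧` and `∨`). -/
def QFree : KrF Λ → Prop
  | atom _ _ => True
  | and a b => QFree a ∧ QFree b
  | or a b => QFree a ∧ QFree b
  | all _ _ _ _ => False
  | ex _ _ _ _ => False

/-- Formulas built from atoms using only `∧`, `∨` and restricted universal quantification
(no existential quantifier). -/
def NoEx : KrF Λ → Prop
  | atom _ _ => True
  | and a b => NoEx a ∧ NoEx b
  | or a b => NoEx a ∧ NoEx b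
  | all _ _ _ β => NoEx β
  | ex _ _ _ _ => False

/-- `GKok U e φ`: every variable occurring in an `L`-expression of an atom of `φ` is
inherently universal. Here `U` is the set of variables that are inherently universal so far
(initially the free variables) and `e` records whether we are within the scope of an
existential quantifier. -/
def GKok : Set ℕ → Bool → KrF Λ → Prop
  | U, _, atom _ E => E.evars ⊆ U
  | U, e, and a b => GKok U e a ∧ GKok U e b
  | U, e, or a b => GKok U e a ∧ GKok U e b
  | U, false, all y _ _ β => GKok (insert y U) false β
  | U, true, all _ _ _ β => GKok U true β
  | U, _, ex _ _ _ β => GKok U true β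

end KrF

/-- A generalized Kracht formula with free variables: clean, restrictedly positive with safe
atoms, and in every atom `y ∈ E` all variables of `E` are inherently universal. -/
def IsGenKrachtFV {Λ : Type u} (α : KrF Λ) : Prop :=
  α.Clean ∧ α.AtomsAll Safe ∧ α.GKok α.fv false

/-- A generalized Kracht formula: a generalized Kracht formula with free variables whose
only free variable is `x0`. -/
def IsGenKracht {Λ : Type u} (α : KrF Λ) (x0 : ℕ) : Prop :=
  IsGenKrachtFV α ∧ α.fv = {x0}

/-- Generalized Sahlqvist antecedents: built from regular box-formulas and negative
formulas using only `∧`, `∨`, `◇_λ`. -/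
inductive GSAnt {Λ : Type u} : MF Λ (ℕ × ℕ) → Prop
  | reg {φ p} : RegBF Prod.fst φ p → GSAnt φ
  | neg {φ} : Positive φ → GSAnt (.neg φ)
  | and {a b} : GSAnt a → GSAnt b → GSAnt (.and a b)
  | or {a b} : GSAnt a → GSAnt b → GSAnt (.or a b)
  | dia (l) {a} : GSAnt a → GSAnt (.dia l a)

/-- Generalized Sahlqvist formulas: built from generalized Sahlqvist implications
`GSA → ⊥` by applying boxes and conjunctions, and disjunctions only to formulas without
common propositional variables. -/
inductive GSF {Λ : Type u} : MF Λ (ℕ × ℕ) → Prop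
  | impl {a} : GSAnt a → GSF (.imp a .bot)
  | box (l) {a} : GSF a → GSF (.box l a)
  | and {a b} : GSF a → GSF b → GSF (.and a b)
  | or {a b} : GSF a → GSF b → MF.vars a ∩ MF.vars b = ∅ → GSF (.or a b)

open Classical in
/-- The modal translation `E^T` of a quasi-safe expression: safe subexpressions are
replaced by their associated propositional variables `p_E`, and `∩, ∪, R^{-1}_λ, R^□_λ`
become `∧, ∨, ◇_λ, □_λ`. -/
noncomputable def Etrans {Λ : Type u} (pE : LExp Λ → ℕ × ℕ) : LExp Λ → MF Λ (ℕ × ℕ)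
  | .var i => .var (pE (.var i))
  | .top => .top
  | .bot => .bot
  | .inter a b =>
      if Safe (LExp.inter a b) then .var (pE (.inter a b))
      else .and (Etrans pE a) (Etrans pE b)
  | .union a b =>
      if Safe (LExp.union a b) then .var (pE (.union a b))
      else .or (Etrans pE a) (Etrans pE b)
  | .rinv l a =>
      if Safe (LExp.rinv l a) then .var (pE (.rinv l a)) else .dia l (Etrans pE a)
  | .rbox l a =>
      if Safe (LExp.rbox l a) then .var (pE (.rbox l a)) else .box l (Etrans pE a)
  | .rfw l a => if Safe (LExp.rfw l a) then .var (pE (.rfw l a)) else .bot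

/-- A finite disjunction of modal formulas (empty disjunction is `⊥`). -/
def orList {Λ : Type u} {V : Type v} : List (MF Λ V) → MF Λ V
  | [] => .bot
  | a :: as => .or a (orList as)


/-!
The negation of `α` is equivalent to a finite disjunction of clauses: trees of restricted
existential quantifiers over negated atoms `y ∉ E`. Each clause `c` becomes a generalized
Sahlqvist antecedent `A_c` that is satisfiable at `w` iff `c` is satisfiable with `x₀ ↦ w`, and
`φ := (⋁_c A_c) → ⊥` is then the local correspondent of `α`.

A quasi-safe `E` is translated into a positive formula `E.modal n` in fresh variables, together
with commitments at the points named by the individual variables of `E`: the propositional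
variable standing for `x_i` is committed at `x_i`, and the one standing for a safe `R_λ(S)` by a
regular box-formula `□ (POS → … □_λ p)` at the variable at the bottom of the spine of `S`.
Every valuation meeting the commitments makes `E.modal n` true on `⟦E⟧`, so that `¬ E.modal n`
forces `y ∉ E`; the minimal one makes it true only on `⟦E⟧`. Fresh variables `(k, i)` are
allocated by their index `i`, in the block `[n, n + size E)`; the variable for `R_λ(S)` gets the
rank `size S`, above the ranks of all variables in the antecedents along the spine of `S`.
-/

theorem sat_congr {Λ : Type u} {V : Type v} (F : Frame Λ) {θ θ' : V → Set F.W} {φ : MF Λ V}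
    (h : ∀ q ∈ φ.vars, θ q = θ' q) (x : F.W) : sat F θ x φ ↔ sat F θ' x φ := by
  induction φ generalizing x with
  | var p => exact iff_of_eq (congrArg (x ∈ ·) (h p rfl))
  | top | bot => rfl
  | and a b iha ihb | or a b iha ihb | imp a b iha ihb =>
      simp only [sat, iha fun q hq => h q (.inl hq), ihb fun q hq => h q (.inr hq)]
  | neg a ih | dia l a ih | box l a ih => simp only [sat, ih h]

section FreshVariables

variable {Λ : Type u} {W : Type w} {n m : ℕ}

def AgreeBelow (n : ℕ) (θ θ' : ℕ × ℕ → Set W) : Prop :=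
  ∀ q : ℕ × ℕ, q.2 < n → θ q = θ' q

def VarsBelow (n : ℕ) (φ : MF Λ (ℕ × ℕ)) : Prop :=
  ∀ q ∈ φ.vars, q.2 < n

theorem AgreeBelow.trans {θ θ' θ'' : ℕ × ℕ → Set W} (h : AgreeBelow n θ θ')
    (h' : AgreeBelow n θ' θ'') : AgreeBelow n θ θ'' :=
  fun q hq => (h q hq).trans (h' q hq)

theorem AgreeBelow.mono {θ θ' : ℕ × ℕ → Set W} (h : AgreeBelow m θ θ') (hnm : n ≤ m) :
    AgreeBelow n θ θ' :=
  fun q hq => h q (hq.trans_le hnm)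

theorem VarsBelow.mono {φ : MF Λ (ℕ × ℕ)} (h : VarsBelow n φ) (hnm : n ≤ m) : VarsBelow m φ :=
  fun q hq => (h q hq).trans_le hnm

theorem sat_congr_of_agreeBelow {F : Frame Λ} {θ θ' : ℕ × ℕ → Set F.W} {φ : MF Λ (ℕ × ℕ)}
    (hφ : VarsBelow n φ) (hθ : AgreeBelow n θ θ') (x : F.W) : sat F θ x φ ↔ sat F θ' x φ :=
  sat_congr F (fun q hq => hθ q (hφ q hq)) x

theorem exists_agreeBelow_and (hnm : n ≤ m) {θ₀ : ℕ × ℕ → Set W}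
    {P Q : (ℕ × ℕ → Set W) → Prop} (hP : ∃ θ, AgreeBelow n θ θ₀ ∧ P θ)
    (hPm : ∀ θ θ', AgreeBelow m θ θ' → P θ' → P θ)
    (hQ : ∀ θ, AgreeBelow n θ θ₀ → P θ → ∃ θ', AgreeBelow m θ' θ ∧ Q θ') :
    ∃ θ, AgreeBelow n θ θ₀ ∧ P θ ∧ Q θ := by
  obtain ⟨θ₁, h₁, hP₁⟩ := hP
  obtain ⟨θ₂, h₂, hQ₂⟩ := hQ θ₁ h₁ hP₁
  exact ⟨θ₂, (h₂.mono hnm).trans h₁, hPm θ₂ θ₁ h₂ hP₁, hQ₂⟩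

end FreshVariables

/-- `C z` is the part of an antecedent to be satisfied at the point named by `x_z`. -/
abbrev Commitments (Λ : Type u) := ℕ → MF Λ (ℕ × ℕ)

namespace Commitments

variable {Λ : Type u}

def triv : Commitments Λ := fun _ => .neg .bot

def merge (C D : Commitments Λ) : Commitments Λ := fun z => .and (C z) (D z)

def add (C : Commitments Λ) (x : ℕ) (ψ : MF Λ (ℕ × ℕ)) : Commitments Λ :=
  Function.update C x (.and ψ (C x))

def erase (C : Commitments Λ) (x : ℕ) : Commitments Λ := Function.update C x (.neg .bot)

variable {F : Frame Λ} {θ : ℕ × ℕ → Set F.W} {u : F.W} {C D : Commitments Λ} {x z N : ℕ}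
  {ψ : MF Λ (ℕ × ℕ)}

theorem sat_triv : sat F θ u ((triv : Commitments Λ) z) := fun h => h

theorem sat_add : sat F θ u (C.add x ψ z) ↔ (z = x → sat F θ u ψ) ∧ sat F θ u (C z) := by
  by_cases hz : z = x
  · subst hz; simp [add, sat]
  · simp [add, hz]

theorem sat_erase : sat F θ u (C.erase x z) ↔ (z ≠ x → sat F θ u (C z)) := by
  by_cases hz : z = x
  · subst hz; simp [erase, sat]
  · simp [erase, hz]

theorem gsant_triv : GSAnt ((triv : Commitments Λ) z) := .neg .bot

theorem gsant_add (hC : ∀ z, GSAnt (C z)) (hψ : GSAnt ψ) : GSAnt (C.add x ψ z) := by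
  by_cases hz : z = x
  · subst hz; simpa [add] using GSAnt.and hψ (hC z)
  · simpa [add, hz] using hC z

theorem gsant_erase (hC : ∀ z, GSAnt (C z)) : GSAnt (C.erase x z) := by
  by_cases hz : z = x
  · subst hz; simpa [erase] using GSAnt.neg .bot
  · simpa [erase, hz] using hC z

theorem varsBelow_triv : VarsBelow N ((triv : Commitments Λ) z) := by
  simp [VarsBelow, triv, MF.vars]

theorem varsBelow_merge (hC : VarsBelow N (C z)) (hD : VarsBelow N (D z)) :
    VarsBelow N (C.merge D z) := by
  rintro q (hq | hq)
  exacts [hC q hq, hD q hq]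

theorem varsBelow_add (hC : ∀ z, VarsBelow N (C z)) (hψ : VarsBelow N ψ) :
    VarsBelow N (C.add x ψ z) := by
  by_cases hz : z = x
  · subst hz
    rintro q hq
    simp only [add, Function.update_self, MF.vars, Set.mem_union] at hq
    exact hq.elim (hψ q) (hC z q)
  · simpa [add, hz] using hC z

theorem varsBelow_erase (hC : ∀ z, VarsBelow N (C z)) : VarsBelow N (C.erase x z) := by
  by_cases hz : z = x
  · subst hz; simp [VarsBelow, erase, MF.vars]
  · simpa [erase, hz] using hC z

end Commitments

section ArgsSafe

variable {Λ : Type u}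

def ArgsSafe (e : LExp Λ) : Prop := ∀ l a, Subexp (.rfw l a) e → SafeFor a

theorem Subexp.trans {a b c : LExp Λ} (hab : Subexp a b) (hbc : Subexp b c) : Subexp a c := by
  induction hbc with
  | refl => exact hab
  | interL _ ih => exact .interL (ih hab)
  | interR _ ih => exact .interR (ih hab)
  | unionL _ ih => exact .unionL (ih hab)
  | unionR _ ih => exact .unionR (ih hab)
  | rinv l _ ih => exact .rinv l (ih hab)
  | rbox l _ ih => exact .rbox l (ih hab)
  | rfw l _ ih => exact .rfw l (ih hab)

theorem ArgsSafe.of_subexp {e e' : LExp Λ} (he : ArgsSafe e) (h : Subexp e' e) : ArgsSafe e' :=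
  fun l a ha => he l a (ha.trans h)

theorem QuasiSafe.argsSafe {e : LExp Λ} (he : QuasiSafe e) : ArgsSafe e := by
  induction he with
  | safe h => exact h.2
  | top | bot => rintro _ _ ⟨⟩
  | inter _ _ iha ihb =>
      rintro l x (_ | h | h)
      exacts [iha l x h, ihb l x h]
  | union _ _ iha ihb =>
      rintro l x (_ | _ | _ | h | h)
      exacts [iha l x h, ihb l x h]
  | rinv _ _ ih =>
      intro l x h
      cases h with | rinv _ h => exact ih l x h
  | rbox _ _ ih =>
      intro l x h
      cases h with | rbox _ h => exact ih l x h

end ArgsSafe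

namespace LExp

variable {Λ : Type u}

open Commitments

def size : LExp Λ → ℕ
  | var _ | top | bot => 1
  | inter a b | union a b => a.size + b.size + 1
  | rinv _ a | rbox _ a | rfw _ a => a.size + 1

def modal : LExp Λ → ℕ → MF Λ (ℕ × ℕ)
  | var _, n => .var (0, n)
  | top, _ => .top
  | bot, _ => .bot
  | inter a b, n => .and (a.modal n) (b.modal (n + a.size))
  | union a b, n => .or (a.modal n) (b.modal (n + a.size))
  | rinv l a, n => .dia l (a.modal n)
  | rbox l a, n => .box l (a.modal n)
  | rfw _ a, n => .var (a.size, n)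

mutual

noncomputable def commits : LExp Λ → ℕ → Commitments Λ
  | var i, n => triv.add i (.var (0, n))
  | top, _ | bot, _ => triv
  | inter a b, n | union a b, n => (a.commits n).merge (b.commits (n + a.size))
  | rinv _ a, n | rbox _ a, n => a.commits n
  | rfw l a, n => a.spineCommits (.box l (.var (a.size, n))) (n + 1)

noncomputable def spineCommits : LExp Λ → MF Λ (ℕ × ℕ) → ℕ → Commitments Λ
  | var i, φ, _ => triv.add i φ
  | rfw l a, φ, n => a.spineCommits (.box l φ) n
  | inter a b, φ, n =>
      open Classical in
      if SafeFor a then (b.commits n).merge (a.spineCommits (.imp (b.modal n) φ) (n + b.size))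
      else (a.commits n).merge (b.spineCommits (.imp (a.modal n) φ) (n + a.size))
  | _, _, _ => triv

end

theorem modal_positive (e : LExp Λ) (n : ℕ) : Positive (e.modal n) := by
  induction e generalizing n with
  | var | rfw => exact .var _
  | top => exact .top
  | bot => exact .bot
  | inter a b iha ihb => exact .and (iha n) (ihb _)
  | union a b iha ihb => exact .or (iha n) (ihb _)
  | rinv l a ih => exact .dia l (ih n)
  | rbox l a ih => exact .box l (ih n)

theorem rank_lt_of_mem_vars_modal {e : LExp Λ} {n : ℕ} {q : ℕ × ℕ}
    (hq : q ∈ (e.modal n).vars) : q.1 < e.size := by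
  induction e generalizing n with
  | var | rfw => simp_all [modal, MF.vars, size]
  | top | bot => simp [modal, MF.vars] at hq
  | inter a b iha ihb | union a b iha ihb =>
      rcases hq with hq | hq
      · have := iha hq; simp only [size]; omega
      · have := ihb hq; simp only [size]; omega
  | rinv l a ih | rbox l a ih => have := ih hq; simp only [size]; omega

theorem varsBelow_modal {e : LExp Λ} {n N : ℕ} (h : n + e.size ≤ N) :
    VarsBelow N (e.modal n) := by
  induction e generalizing n with
  | var | rfw => simp only [size] at h; simp [VarsBelow, modal, MF.vars]; omega
  | top | bot => simp [VarsBelow, modal, MF.vars]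
  | inter a b iha ihb | union a b iha ihb =>
      simp only [size] at h
      rintro q (hq | hq)
      exacts [iha (by omega) q hq, ihb (by omega) q hq]
  | rinv l a ih | rbox l a ih => simp only [size] at h; exact ih (by omega)

mutual

theorem varsBelow_commits {N : ℕ} : ∀ (e : LExp Λ) (n : ℕ), n + e.size ≤ N →
    ∀ z, VarsBelow N (e.commits n z)
  | var _, n, h, _ => varsBelow_add (fun _ => varsBelow_triv) (by
      simp only [size] at h; simp [VarsBelow, MF.vars]; omega)
  | top, _, _, _ | bot, _, _, _ => varsBelow_triv
  | inter a b, n, h, z | union a b, n, h, z => by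
      simp only [size] at h
      exact varsBelow_merge (a.varsBelow_commits n (by omega) z)
        (b.varsBelow_commits _ (by omega) z)
  | rinv _ a, n, h, z | rbox _ a, n, h, z => by
      simp only [size] at h; exact a.varsBelow_commits n (by omega) z
  | rfw l a, n, h, z => by
      simp only [size] at h
      exact a.varsBelow_spineCommits (by simp [VarsBelow, MF.vars]; omega) _ (by omega) z

theorem varsBelow_spineCommits {N : ℕ} : ∀ (e : LExp Λ) {φ : MF Λ (ℕ × ℕ)}, VarsBelow N φ →
    ∀ n, n + e.size ≤ N → ∀ z, VarsBelow N (e.spineCommits φ n z)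
  | var _, _, hφ, _, _, _ => varsBelow_add (fun _ => varsBelow_triv) hφ
  | rfw l a, φ, hφ, n, h, z => by
      simp only [size] at h
      exact a.varsBelow_spineCommits (φ := .box l φ) hφ n (by omega) z
  | inter a b, φ, hφ, n, h, z => by
      simp only [size] at h
      unfold spineCommits
      split_ifs
      · exact varsBelow_merge (b.varsBelow_commits n (by omega) z)
          (a.varsBelow_spineCommits (φ := .imp (b.modal n) φ)
            (fun q hq => hq.elim (varsBelow_modal (by omega) q) (hφ q)) (n + b.size) (by omega) z)
      · exact varsBelow_merge (a.varsBelow_commits n (by omega) z)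
          (b.varsBelow_spineCommits (φ := .imp (a.modal n) φ)
            (fun q hq => hq.elim (varsBelow_modal (by omega) q) (hφ q)) (n + a.size) (by omega) z)
  | top, _, _, _, _, _ | bot, _, _, _, _, _ | union _ _, _, _, _, _, _
  | rinv _ _, _, _, _, _, _ | rbox _ _, _, _, _, _, _ => varsBelow_triv

end

mutual

theorem gsant_commits : ∀ (e : LExp Λ) (n z : ℕ), GSAnt (e.commits n z)
  | var _, _, _ => gsant_add (fun _ => gsant_triv) (.reg (.var _))
  | top, _, _ | bot, _, _ => gsant_triv
  | inter a b, n, z | union a b, n, z => .and (a.gsant_commits n z) (b.gsant_commits _ z)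
  | rinv _ a, n, z | rbox _ a, n, z => a.gsant_commits n z
  | rfw l a, _, z => a.gsant_spineCommits (.box l (.var _)) le_rfl _ z

theorem gsant_spineCommits : ∀ (e : LExp Λ) {φ : MF Λ (ℕ × ℕ)} {p : ℕ × ℕ},
    RegBF Prod.fst φ p → e.size ≤ p.1 → ∀ n z, GSAnt (e.spineCommits φ n z)
  | var _, _, _, hφ, _, _, _ => gsant_add (fun _ => gsant_triv) (.reg hφ)
  | rfw l a, _, _, hφ, h, n, z => by
      simp only [size] at h; exact a.gsant_spineCommits (.box l hφ) (by omega) n z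
  | inter a b, _, _, hφ, h, n, z => by
      simp only [size] at h
      unfold spineCommits
      split_ifs
      · refine .and (b.gsant_commits n z) (a.gsant_spineCommits
          (.imp (modal_positive b n) (fun q hq => ?_) hφ) (by omega) _ z)
        have := rank_lt_of_mem_vars_modal hq; omega
      · refine .and (a.gsant_commits n z) (b.gsant_spineCommits
          (.imp (modal_positive a n) (fun q hq => ?_) hφ) (by omega) _ z)
        have := rank_lt_of_mem_vars_modal hq; omega
  | top, _, _, _, _, _, _ | bot, _, _, _, _, _, _ | union _ _, _, _, _, _, _, _
  | rinv _ _, _, _, _, _, _, _ | rbox _ _, _, _, _, _, _, _ => gsant_triv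

end

section Semantics

variable {F : Frame Λ} {g : ℕ → F.W}

mutual

theorem sat_modal_of_commits {θ : ℕ × ℕ → Set F.W} : ∀ (e : LExp Λ), ArgsSafe e → ∀ n,
    (∀ z ∈ e.evars, sat F θ (g z) (e.commits n z)) →
    ∀ u ∈ e.den F g, sat F θ u (e.modal n)
  | var i, _, _, hC, _, rfl => (sat_add.1 (hC i rfl)).1 rfl
  | top, _, _, _, _, _ => trivial
  | inter a b, he, n, hC, u, hu =>
      ⟨a.sat_modal_of_commits (he.of_subexp (.interL (.refl a))) n
          (fun z hz => (hC z (.inl hz)).1) u hu.1,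
        b.sat_modal_of_commits (he.of_subexp (.interR (.refl b))) _
          (fun z hz => (hC z (.inr hz)).2) u hu.2⟩
  | union a b, he, n, hC, u, hu => hu.imp
      (a.sat_modal_of_commits (he.of_subexp (.unionL (.refl a))) n
          (fun z hz => (hC z (.inl hz)).1) u)
      (b.sat_modal_of_commits (he.of_subexp (.unionR (.refl b))) _
          (fun z hz => (hC z (.inr hz)).2) u)
  | rinv l a, he, n, hC, _, ⟨v, huv, hv⟩ =>
      ⟨v, huv, a.sat_modal_of_commits (he.of_subexp (.rinv l (.refl a))) n hC v hv⟩
  | rbox l a, he, n, hC, _, hu => fun v huv =>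
      a.sat_modal_of_commits (he.of_subexp (.rbox l (.refl a))) n hC v (hu v huv)
  | rfw l a, he, _, hC, u, ⟨v, hvu, hv⟩ =>
      have ha : Safe a := ⟨he l a (.refl _), he.of_subexp (.rfw l (.refl a))⟩
      a.sat_of_spineCommits ha _ _ hC v hv u hvu

theorem sat_of_spineCommits {θ : ℕ × ℕ → Set F.W} : ∀ (e : LExp Λ), Safe e →
    ∀ (φ : MF Λ (ℕ × ℕ)) n, (∀ z ∈ e.evars, sat F θ (g z) (e.spineCommits φ n z)) →
    ∀ u ∈ e.den F g, sat F θ u φ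
  | var i, _, _, _, hC, _, rfl => (sat_add.1 (hC i rfl)).1 rfl
  | rfw l a, he, φ, n, hC, u, ⟨v, hvu, hv⟩ => by
      have ha : Safe a := ⟨by cases he.1; assumption, ArgsSafe.of_subexp he.2 (.rfw l (.refl a))⟩
      exact a.sat_of_spineCommits ha (.box l φ) n hC v hv u hvu
  | inter a b, he, φ, n, hC, u, ⟨hua, hub⟩ => by
      have hsa := ArgsSafe.of_subexp he.2 (.interL (.refl a))
      have hsb := ArgsSafe.of_subexp he.2 (.interR (.refl b))
      unfold spineCommits at hC
      split_ifs at hC with ha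
      · exact a.sat_of_spineCommits ⟨ha, hsa⟩ _ _ (fun z hz => (hC z (.inl hz)).2) u hua
          (b.sat_modal_of_commits hsb n (fun z hz => (hC z (.inr hz)).1) u hub)
      · have hb : SafeFor b := by cases he.1 <;> trivial
        exact b.sat_of_spineCommits ⟨hb, hsb⟩ _ _ (fun z hz => (hC z (.inr hz)).2) u hub
          (a.sat_modal_of_commits hsa n (fun z hz => (hC z (.inl hz)).1) u hua)
  | top, he, _, _, _, _, _ | bot, he, _, _, _, _, _ | union _ _, he, _, _, _, _, _
  | rinv _ _, he, _, _, _, _, _ | rbox _ _, he, _, _, _, _, _ => by cases he.1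

end

def IsMinVal (F : Frame Λ) (g : ℕ → F.W) (e : LExp Λ) (n : ℕ) (θ : ℕ × ℕ → Set F.W) :
    Prop :=
  (∀ z, sat F θ (g z) (e.commits n z)) ∧ ∀ u, sat F θ u (e.modal n) → u ∈ e.den F g

theorem IsMinVal.of_agreeBelow {e : LExp Λ} {n : ℕ} {θ θ' : ℕ × ℕ → Set F.W}
    (h : AgreeBelow (n + e.size) θ θ') (hθ' : IsMinVal F g e n θ') : IsMinVal F g e n θ :=
  ⟨fun z => (sat_congr_of_agreeBelow (varsBelow_commits e n le_rfl z) h _).2 (hθ'.1 z),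
    fun u hu => hθ'.2 u ((sat_congr_of_agreeBelow (varsBelow_modal le_rfl) h u).1 hu)⟩

mutual

theorem exists_isMinVal : ∀ (e : LExp Λ) (n : ℕ) (θ₀ : ℕ × ℕ → Set F.W),
    ∃ θ, AgreeBelow n θ θ₀ ∧ IsMinVal F g e n θ
  | var i, n, θ₀ => by
      refine ⟨Function.update θ₀ (0, n) {g i}, fun q hq => ?_, fun z => ?_, fun u hu => ?_⟩
      · exact Function.update_of_ne (by rintro rfl; simp at hq) _ _
      · exact sat_add.2 ⟨fun hz => by subst hz; simp [sat], sat_triv⟩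
      · simpa [modal, sat, den] using hu
  | top, _, θ₀ => ⟨θ₀, fun _ _ => rfl, fun _ => sat_triv, fun u _ => Set.mem_univ u⟩
  | bot, _, θ₀ => ⟨θ₀, fun _ _ => rfl, fun _ => sat_triv, fun _ hu => hu.elim⟩
  | inter a b, n, θ₀ => by
      obtain ⟨θ, hθ, ⟨hCa, hTa⟩, hCb, hTb⟩ := exists_agreeBelow_and
        (Nat.le_add_right n a.size) (a.exists_isMinVal n θ₀)
        (fun _ _ h => IsMinVal.of_agreeBelow h) (fun θ₁ _ _ => b.exists_isMinVal _ θ₁)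
      exact ⟨θ, hθ, fun z => ⟨hCa z, hCb z⟩, fun u hu => ⟨hTa u hu.1, hTb u hu.2⟩⟩
  | union a b, n, θ₀ => by
      obtain ⟨θ, hθ, ⟨hCa, hTa⟩, hCb, hTb⟩ := exists_agreeBelow_and
        (Nat.le_add_right n a.size) (a.exists_isMinVal n θ₀)
        (fun _ _ h => IsMinVal.of_agreeBelow h) (fun θ₁ _ _ => b.exists_isMinVal _ θ₁)
      exact ⟨θ, hθ, fun z => ⟨hCa z, hCb z⟩, fun u hu => hu.imp (hTa u) (hTb u)⟩
  | rinv _ a, n, θ₀ => by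
      obtain ⟨θ, hθ, hC, hT⟩ := a.exists_isMinVal n θ₀
      exact ⟨θ, hθ, hC, fun u ⟨v, huv, hv⟩ => ⟨v, huv, hT v hv⟩⟩
  | rbox _ a, n, θ₀ => by
      obtain ⟨θ, hθ, hC, hT⟩ := a.exists_isMinVal n θ₀
      exact ⟨θ, hθ, hC, fun u hu v huv => hT v (hu v huv)⟩
  | rfw l a, n, θ₀ => by
      set θ₁ := Function.update θ₀ (a.size, n) ((rfw l a).den F g)
      obtain ⟨θ, hθ, hC⟩ := a.exists_agreeBelow_spineCommits (.box l (.var (a.size, n)))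
        (n + 1) θ₁ (by simp [VarsBelow, MF.vars])
        (fun v hv u hvu => by simpa [θ₁, sat] using ⟨v, hvu, hv⟩)
      refine ⟨θ, fun q hq => ?_, hC, fun u hu => ?_⟩
      · rw [hθ q (by omega)]
        exact Function.update_of_ne (by rintro rfl; simp at hq) _ _
      · simpa [θ₁, modal, sat, hθ (a.size, n) (Nat.lt_succ_self n)] using hu

theorem exists_agreeBelow_spineCommits : ∀ (e : LExp Λ) (φ : MF Λ (ℕ × ℕ)) (n : ℕ)
    (θ₀ : ℕ × ℕ → Set F.W), VarsBelow n φ → (∀ u ∈ e.den F g, sat F θ₀ u φ) →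
    ∃ θ, AgreeBelow n θ θ₀ ∧ ∀ z, sat F θ (g z) (e.spineCommits φ n z)
  | var i, _, _, θ₀, _, hφ =>
      ⟨θ₀, fun _ _ => rfl, fun _ => sat_add.2 ⟨fun hz => hz ▸ hφ (g i) rfl, sat_triv⟩⟩
  | rfw l a, φ, n, θ₀, hvars, hφ =>
      a.exists_agreeBelow_spineCommits (.box l φ) n θ₀ hvars
        fun v hv u hvu => hφ u ⟨v, hvu, hv⟩
  | inter a b, φ, n, θ₀, hvars, hφ => by
      unfold spineCommits
      split_ifs
      · obtain ⟨θ, hθ, ⟨hCb, -⟩, hC⟩ := exists_agreeBelow_and (Nat.le_add_right n b.size)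
          (b.exists_isMinVal n θ₀) (fun _ _ h => IsMinVal.of_agreeBelow h)
          (fun θ₁ h₁ hb => a.exists_agreeBelow_spineCommits (.imp (b.modal n) φ) _ θ₁
            (fun q hq => hq.elim (varsBelow_modal le_rfl q) (hvars.mono (by omega) q))
            (fun u hua hub =>
              (sat_congr_of_agreeBelow hvars h₁ u).2 (hφ u ⟨hua, hb.2 u hub⟩)))
        exact ⟨θ, hθ, fun z => ⟨hCb z, hC z⟩⟩
      · obtain ⟨θ, hθ, ⟨hCa, -⟩, hC⟩ := exists_agreeBelow_and (Nat.le_add_right n a.size)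
          (a.exists_isMinVal n θ₀) (fun _ _ h => IsMinVal.of_agreeBelow h)
          (fun θ₁ h₁ ha => b.exists_agreeBelow_spineCommits (.imp (a.modal n) φ) _ θ₁
            (fun q hq => hq.elim (varsBelow_modal le_rfl q) (hvars.mono (by omega) q))
            (fun u hub hua =>
              (sat_congr_of_agreeBelow hvars h₁ u).2 (hφ u ⟨ha.2 u hua, hub⟩)))
        exact ⟨θ, hθ, fun z => ⟨hCa z, hC z⟩⟩
  | top, _, _, θ₀, _, _ | bot, _, _, θ₀, _, _ | union _ _, _, _, θ₀, _, _
  | rinv _ _, _, _, θ₀, _, _ | rbox _ _, _, _, θ₀, _, _ =>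
      ⟨θ₀, fun _ _ => rfl, fun _ => sat_triv⟩

end

end Semantics

end LExp

inductive Clause (Λ : Type u) : Type u
  | natom : ℕ → LExp Λ → Clause Λ
  | and : Clause Λ → Clause Λ → Clause Λ
  | ex : ℕ → Λ → ℕ → Clause Λ → Clause Λ

namespace Clause

variable {Λ : Type u}

def holds (F : Frame Λ) : (ℕ → F.W) → Clause Λ → Prop
  | g, natom y E => g y ∉ E.den F g
  | g, and a b => holds F g a ∧ holds F g b
  | g, ex y l x c => ∃ w, F.R l (g x) w ∧ holds F (Function.update g y w) c

def fv : Clause Λ → Set ℕ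
  | natom y E => insert y E.evars
  | and a b => fv a ∪ fv b
  | ex y _ x c => insert x (fv c \ {y})

def AtomsAll (P : LExp Λ → Prop) : Clause Λ → Prop
  | natom _ E => P E
  | and a b => AtomsAll P a ∧ AtomsAll P b
  | ex _ _ _ c => AtomsAll P c

def size : Clause Λ → ℕ
  | natom _ E => E.size
  | and a b => a.size + b.size
  | ex _ _ _ c => c.size

open Commitments

noncomputable def ante : Clause Λ → ℕ → Commitments Λ
  | natom y E, n => (E.commits n).add y (.neg (E.modal n))
  | and a b, n => (a.ante n).merge (b.ante (n + a.size))
  | ex y l x c, n => ((c.ante n).erase y).add x (.dia l (c.ante n y))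

theorem gsant_ante (c : Clause Λ) (n z : ℕ) : GSAnt (c.ante n z) := by
  induction c generalizing n z with
  | natom y E => exact gsant_add (E.gsant_commits n) (.neg (E.modal_positive n))
  | and a b iha ihb => exact .and (iha n z) (ihb _ z)
  | ex y l x c ih => exact gsant_add (fun _ => gsant_erase (ih n)) (.dia l (ih n y))

theorem varsBelow_ante {N : ℕ} (c : Clause Λ) (n : ℕ) (h : n + c.size ≤ N) (z : ℕ) :
    VarsBelow N (c.ante n z) := by
  induction c generalizing n z with
  | natom y E => exact varsBelow_add (E.varsBelow_commits n h) (LExp.varsBelow_modal h)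
  | and a b iha ihb =>
      simp only [size] at h
      exact varsBelow_merge (iha n (by omega) z) (ihb _ (by omega) z)
  | ex y l x c ih => exact varsBelow_add (fun _ => varsBelow_erase (ih n h)) (ih n h y)

variable {F : Frame Λ}

theorem holds_of_sat_ante {c : Clause Λ} (hc : c.AtomsAll ArgsSafe) {n : ℕ}
    {θ : ℕ × ℕ → Set F.W} {g : ℕ → F.W} (hD : ∀ z ∈ c.fv, sat F θ (g z) (c.ante n z)) :
    c.holds F g := by
  induction c generalizing n g with
  | natom y E =>
      have hC z (hz : z ∈ E.evars) := (sat_add.1 (hD z (Set.mem_insert_of_mem y hz))).2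
      exact fun hy => (sat_add.1 (hD y (Set.mem_insert y _))).1 rfl
        (E.sat_modal_of_commits hc n hC (g y) hy)
  | and a b iha ihb =>
      exact ⟨iha hc.1 fun z hz => (hD z (.inl hz)).1, ihb hc.2 fun z hz => (hD z (.inr hz)).2⟩
  | ex y l x c ih =>
      obtain ⟨v, hxv, hv⟩ := (sat_add.1 (hD x (Set.mem_insert x _))).1 rfl
      refine ⟨v, hxv, ih hc (n := n) fun z hz => ?_⟩
      by_cases hzy : z = y
      · subst hzy; simpa using hv
      · simpa [hzy] using sat_erase.1 (sat_add.1 (hD z (.inr ⟨hz, hzy⟩))).2 hzy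

theorem exists_sat_ante {c : Clause Λ} {g : ℕ → F.W} (hc : c.holds F g) (n : ℕ)
    (θ₀ : ℕ × ℕ → Set F.W) :
    ∃ θ, AgreeBelow n θ θ₀ ∧ ∀ z, sat F θ (g z) (c.ante n z) := by
  induction c generalizing g n θ₀ with
  | natom y E =>
      obtain ⟨θ, hθ, hC, hT⟩ := E.exists_isMinVal (g := g) n θ₀
      exact ⟨θ, hθ, fun z => sat_add.2 ⟨fun hz => hz ▸ fun hy => hc (hT _ hy), hC z⟩⟩
  | and a b iha ihb =>
      obtain ⟨θ, hθ, ha, hb⟩ := exists_agreeBelow_and (Nat.le_add_right n a.size)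
        (iha hc.1 n θ₀)
        (fun _ _ h ha z => (sat_congr_of_agreeBelow (a.varsBelow_ante n le_rfl z) h _).2 (ha z))
        (fun θ₁ _ _ => ihb hc.2 (n + a.size) θ₁)
      exact ⟨θ, hθ, fun z => ⟨ha z, hb z⟩⟩
  | ex y l x c ih =>
      obtain ⟨v, hxv, hv⟩ := hc
      obtain ⟨θ, hθ, hD⟩ := ih hv n θ₀
      refine ⟨θ, hθ, fun z => sat_add.2 ⟨fun hz => hz ▸ ⟨v, hxv, by simpa using hD y⟩,
        sat_erase.2 fun hzy => by simpa [hzy] using hD z⟩⟩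

theorem exists_sat_ante_iff {c : Clause Λ} (hc : c.AtomsAll ArgsSafe) {x : ℕ}
    (hfv : c.fv ⊆ {x}) (w : F.W) :
    (∃ θ, sat F θ w (c.ante 0 x)) ↔ ∃ g : ℕ → F.W, g x = w ∧ c.holds F g := by
  constructor
  · rintro ⟨θ, hθ⟩
    exact ⟨fun _ => w, rfl, holds_of_sat_ante hc fun z hz => (hfv hz : z = x) ▸ hθ⟩
  · rintro ⟨g, rfl, hg⟩
    obtain ⟨θ, -, hθ⟩ := exists_sat_ante hg 0 (fun _ => ∅)
    exact ⟨θ, hθ x⟩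

end Clause

namespace KrF

variable {Λ : Type u}

def clauses : KrF Λ → List (Clause Λ)
  | atom y E => [.natom y E]
  | and a b => a.clauses ++ b.clauses
  | or a b => (a.clauses ×ˢ b.clauses).map fun p => .and p.1 p.2
  | all y l x β => β.clauses.map (.ex y l x)
  | ex _ _ _ _ => []

theorem holds_iff_forall_not_holds_clauses {F : Frame Λ} {α : KrF Λ} (h : α.NoEx)
    (g : ℕ → F.W) : α.holds F g ↔ ∀ c ∈ α.clauses, ¬ c.holds F g := by
  induction α generalizing g with
  | atom y E => simp [holds, clauses, Clause.holds]
  | and a b iha ihb => simp [holds, clauses, iha h.1, ihb h.2, or_imp, forall_and]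
  | or a b iha ihb =>
      simp only [holds, clauses, iha h.1, ihb h.2, List.mem_map, List.mem_product, Prod.exists]
      constructor
      · rintro (H | H) _ ⟨c₁, c₂, ⟨h₁, h₂⟩, rfl⟩ ⟨k₁, k₂⟩
        exacts [H c₁ h₁ k₁, H c₂ h₂ k₂]
      · intro H
        by_contra! ⟨⟨c₁, h₁, k₁⟩, c₂, h₂, k₂⟩
        exact H _ ⟨c₁, c₂, ⟨h₁, h₂⟩, rfl⟩ ⟨k₁, k₂⟩
  | all y l x β ih =>
      simp only [holds, clauses, ih h, List.forall_mem_map, Clause.holds, not_exists, not_and]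
      exact ⟨fun H c hc w hw => H w hw c hc, fun H w hw c hc => H c hc w hw⟩
  | ex => exact h.elim

theorem fv_subset_of_mem_clauses {α : KrF Λ} {c : Clause Λ} (hc : c ∈ α.clauses) :
    c.fv ⊆ α.fv := by
  induction α generalizing c with
  | atom y E => simp_all [clauses, Clause.fv, fv]
  | and a b iha ihb =>
      rcases List.mem_append.1 hc with hc | hc
      exacts [(iha hc).trans Set.subset_union_left, (ihb hc).trans Set.subset_union_right]
  | or a b iha ihb =>
      obtain ⟨⟨c₁, c₂⟩, hp, rfl⟩ := List.mem_map.1 hc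
      rw [List.mem_product] at hp
      exact Set.union_subset_union (iha hp.1) (ihb hp.2)
  | all y l x β ih =>
      obtain ⟨c', hc', rfl⟩ := List.mem_map.1 hc
      exact Set.insert_subset_insert (Set.sdiff_subset_sdiff_left (ih hc'))
  | ex => simp [clauses] at hc

theorem atomsAll_of_mem_clauses {P : LExp Λ → Prop} {α : KrF Λ} (hα : α.AtomsAll P)
    {c : Clause Λ} (hc : c ∈ α.clauses) : c.AtomsAll P := by
  induction α generalizing c with
  | atom y E => simp_all [clauses, Clause.AtomsAll, AtomsAll]
  | and a b iha ihb =>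
      rcases List.mem_append.1 hc with hc | hc
      exacts [iha hα.1 hc, ihb hα.2 hc]
  | or a b iha ihb =>
      obtain ⟨⟨c₁, c₂⟩, hp, rfl⟩ := List.mem_map.1 hc
      rw [List.mem_product] at hp
      exact ⟨iha hα.1 hp.1, ihb hα.2 hp.2⟩
  | all y l x β ih =>
      obtain ⟨c', hc', rfl⟩ := List.mem_map.1 hc
      exact ih (c := c') hα hc'
  | ex => simp [clauses] at hc

theorem AtomsAll.mono {P Q : LExp Λ → Prop} (hPQ : ∀ e, P e → Q e) {α : KrF Λ}
    (h : α.AtomsAll P) : α.AtomsAll Q := by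
  induction α with
  | atom => exact hPQ _ h
  | and a b iha ihb | or a b iha ihb => exact ⟨iha h.1, ihb h.2⟩
  | all y l x β ih | ex y l x β ih => exact ih h

end KrF

/-- Closed by `¬⊤` rather than `⊥`, so that a disjunction of GSAs is again a GSA. -/
def MF.disj {Λ : Type u} {V : Type v} (L : List (MF Λ V)) : MF Λ V := L.foldr .or (.neg .top)

theorem sat_disj {Λ : Type u} {V : Type v} {F : Frame Λ} {θ : V → Set F.W} {u : F.W}
    {L : List (MF Λ V)} : sat F θ u (MF.disj L) ↔ ∃ ψ ∈ L, sat F θ u ψ := by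
  induction L with
  | nil => simp [MF.disj, sat]
  | cons ψ L ih => simp only [MF.disj, List.foldr_cons, sat] at ih ⊢; simp [ih]

theorem gsant_disj {Λ : Type u} {L : List (MF Λ (ℕ × ℕ))} (h : ∀ ψ ∈ L, GSAnt ψ) :
    GSAnt (MF.disj L) := by
  induction L with
  | nil => exact .neg .top
  | cons ψ L ih =>
      exact .or (h ψ List.mem_cons_self) (ih fun φ hφ => h φ (List.mem_cons_of_mem _ hφ))

/-- every first-order formula with one free variable obtained from quasi-safe
atoms using only conjunction, disjunction and restricted universal quantification is the
local first-order correspondent of some generalized Sahlqvist formula. -/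
theorem statement19 {Λ : Type u} (α : KrF Λ) (x₀ : ℕ)
    (h₁ : α.NoEx) (h₂ : α.AtomsAll QuasiSafe) (h₃ : α.fv = {x₀}) :
    ∃ φ : MF Λ (ℕ × ℕ), GSF φ ∧
      ∀ (F : Frame Λ) (w : F.W),
        (∀ θ : ℕ × ℕ → Set F.W, sat F θ w φ) ↔
          ∀ g : ℕ → F.W, g x₀ = w → KrF.holds F g α := by
  have hsafe := h₂.mono fun _ => QuasiSafe.argsSafe
  refine ⟨.imp (MF.disj (α.clauses.map (·.ante 0 x₀))) .bot, .impl (gsant_disj ?_),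
    fun F w => ?_⟩
  · simp only [List.mem_map]
    rintro _ ⟨c, -, rfl⟩
    exact c.gsant_ante 0 x₀
  have hcorr c (hc : c ∈ α.clauses) := Clause.exists_sat_ante_iff (F := F)
    (KrF.atomsAll_of_mem_clauses hsafe hc) (h₃ ▸ KrF.fv_subset_of_mem_clauses hc) w
  simp only [sat, sat_disj, List.mem_map, exists_exists_and_eq_and,
    KrF.holds_iff_forall_not_holds_clauses h₁]
  constructor
  · intro H g hg c hc hgc
    obtain ⟨θ, hθ⟩ := (hcorr c hc).2 ⟨g, hg, hgc⟩
    exact H θ ⟨c, hc, hθ⟩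
  · rintro H θ ⟨c, hc, hθ⟩
    obtain ⟨g, hg, hgc⟩ := (hcorr c hc).1 ⟨θ, hθ⟩
    exact H g hg c hc hgc
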